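/- Let A ⋈ H be a double cross product with coquasitriangular structure σ, and set v(h, a) = σ(1 ⊗ h, a ⊗ 1) and u(a, h) = σ(a ⊗ 1, 1 ⊗ h). Then the following 'compatibility with actions' identities hold for all a, b ∈ A and g, h ∈ H: v(h₍₁₎, b₍₁₎)(h₍₂₎ ⊲ b₍₂₎) = h₍₁₎ v(h₍₂₎, b) in H, and (g₍₁₎ ⊲ a₍₁₎) u(a₍₂₎, g₍₂₎) = u(a, g₍₁₎) g₍₂₎ in H. -/

import Mathlib

open TensorProduct Coalgebra LinearMap Finset HopfAlgebra

noncomputable section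

variable {k : Type} [Field k]

/-- Representations of `comul a` with index type in `Type 0`. -/
structure Repr0 (k : Type) [CommSemiring k] {A : Type} [AddCommMonoid A] [Module k A]
    [CoalgebraStruct k A] (a : A) where
  {ι : Type}
  (index : Finset ι)
  (left : ι → A)
  (right : ι → A)
  (eq : ∑ i ∈ index, left i ⊗ₜ[k] right i = CoalgebraStruct.comul a)

/-- A skew pairing `λ : A ⊗ H → k` (given as a bilinear map), satisfying (BR1)–(BR4),
with Sweedler sums expressed via arbitrary representations of the comultiplication. -/
structure IsSkewPairing {A H : Type} [Ring A] [Ring H]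
    [Bialgebra k A] [Bialgebra k H] (lam : A →ₗ[k] H →ₗ[k] k) : Prop where
  br1 : ∀ (x y : A) (z : H) (rz : Repr0 k z),
    lam (x * y) z = ∑ i ∈ rz.index, lam x (rz.left i) * lam y (rz.right i)
  br2 : ∀ z : H, lam 1 z = counit (R := k) z
  br3 : ∀ (x : A) (l z : H) (rx : Repr0 k x),
    lam x (l * z) = ∑ i ∈ rx.index, lam (rx.left i) z * lam (rx.right i) l
  br4 : ∀ y : A, lam y 1 = counit (R := k) y

/-- A coquasitriangular (braided) structure on a bialgebra `H` : (BR1)–(BR5). -/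
structure IsCQT {H : Type} [Ring H] [Bialgebra k H]
    (p : H →ₗ[k] H →ₗ[k] k) extends IsSkewPairing p : Prop where
  br5 : ∀ (x y : H) (rx : Repr0 k x) (ry : Repr0 k y),
    ∑ i ∈ rx.index, ∑ j ∈ ry.index, p (rx.left i) (ry.left j) • (rx.right i * ry.right j)
    = ∑ i ∈ rx.index, ∑ j ∈ ry.index, p (rx.right i) (ry.right j) • (ry.left j * rx.left i)

/-- Coquasitriangularity (BR1)–(BR5) for a coalgebra `D` equipped with a (not necessarily
associative, not necessarily typeclass-registered) multiplication `mul` and unit `one`. -/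
structure IsCQTMul {D : Type} [AddCommGroup D] [Module k D] [Coalgebra k D]
    (mul : D →ₗ[k] D →ₗ[k] D) (one : D) (σ : D →ₗ[k] D →ₗ[k] k) : Prop where
  br1 : ∀ (x y z : D) (rz : Repr0 k z),
    σ (mul x y) z = ∑ i ∈ rz.index, σ x (rz.left i) * σ y (rz.right i)
  br2 : ∀ z : D, σ one z = counit (R := k) z
  br3 : ∀ (x l z : D) (rx : Repr0 k x),
    σ x (mul l z) = ∑ i ∈ rx.index, σ (rx.left i) z * σ (rx.right i) l
  br4 : ∀ y : D, σ y one = counit (R := k) y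
  br5 : ∀ (x y : D) (rx : Repr0 k x) (ry : Repr0 k y),
    ∑ i ∈ rx.index, ∑ j ∈ ry.index, σ (rx.left i) (ry.left j) • mul (rx.right i) (ry.right j)
    = ∑ i ∈ rx.index, ∑ j ∈ ry.index, σ (rx.right i) (ry.right j) • mul (ry.left j) (rx.left i)

/-- A matched pair of bialgebras `(A, H, ⊳, ⊲)` : `lact = ⊳ : H ⊗ A → A` is a left
`H`-module coalgebra structure, `ract = ⊲ : H ⊗ A → H` is a right `A`-module coalgebra
structure, together with the matched pair compatibility conditions. -/
structure IsMatchedPair {A H : Type} [Ring A] [Ring H] [Bialgebra k A] [Bialgebra k H]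
    (lact : H →ₗ[k] A →ₗ[k] A) (ract : H →ₗ[k] A →ₗ[k] H) : Prop where
  ract_unit : ∀ h : H, ract h 1 = h
  ract_act : ∀ (h : H) (a b : A), ract h (a * b) = ract (ract h a) b
  ract_comul : ∀ (h : H) (a : A) (rh : Repr0 k h) (ra : Repr0 k a),
    comul (R := k) (ract h a)
      = ∑ i ∈ rh.index, ∑ j ∈ ra.index,
          ract (rh.left i) (ra.left j) ⊗ₜ[k] ract (rh.right i) (ra.right j)
  ract_counit : ∀ (h : H) (a : A),
    counit (R := k) (ract h a) = counit (R := k) h * counit (R := k) a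
  lact_unit : ∀ a : A, lact 1 a = a
  lact_act : ∀ (g h : H) (a : A), lact (g * h) a = lact g (lact h a)
  lact_comul : ∀ (h : H) (a : A) (rh : Repr0 k h) (ra : Repr0 k a),
    comul (R := k) (lact h a)
      = ∑ i ∈ rh.index, ∑ j ∈ ra.index,
          lact (rh.left i) (ra.left j) ⊗ₜ[k] lact (rh.right i) (ra.right j)
  lact_counit : ∀ (h : H) (a : A),
    counit (R := k) (lact h a) = counit (R := k) h * counit (R := k) a
  lact_mul : ∀ (h : H) (a b : A) (rh : Repr0 k h) (ra : Repr0 k a),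
    lact h (a * b) = ∑ i ∈ rh.index, ∑ j ∈ ra.index,
      lact (rh.left i) (ra.left j) * lact (ract (rh.right i) (ra.right j)) b
  mul_ract : ∀ (g h : H) (a : A) (rh : Repr0 k h) (ra : Repr0 k a),
    ract (g * h) a = ∑ i ∈ rh.index, ∑ j ∈ ra.index,
      ract g (lact (rh.left i) (ra.left j)) * ract (rh.right i) (ra.right j)
  lact_one : ∀ h : H, lact h 1 = counit (R := k) h • (1 : A)
  one_ract : ∀ a : A, ract 1 a = counit (R := k) a • (1 : H)
  sym : ∀ (h : H) (a : A) (rh : Repr0 k h) (ra : Repr0 k a),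
    ∑ i ∈ rh.index, ∑ j ∈ ra.index,
        ract (rh.left i) (ra.left j) ⊗ₜ[k] lact (rh.right i) (ra.right j)
    = ∑ i ∈ rh.index, ∑ j ∈ ra.index,
        ract (rh.right i) (ra.right j) ⊗ₜ[k] lact (rh.left i) (ra.left j)

/-- `mulD` is the double cross product multiplication
`(a ⊗ h)(b ⊗ g) = a(h₍₁₎ ⊳ b₍₁₎) ⊗ (h₍₂₎ ⊲ b₍₂₎)g` on `A ⊗ H`. -/
def IsDCPMul {A H : Type} [Ring A] [Ring H] [Bialgebra k A] [Bialgebra k H]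
    (lact : H →ₗ[k] A →ₗ[k] A) (ract : H →ₗ[k] A →ₗ[k] H)
    (mulD : A ⊗[k] H →ₗ[k] A ⊗[k] H →ₗ[k] A ⊗[k] H) : Prop :=
  ∀ (a b : A) (h g : H) (rh : Repr0 k h) (rb : Repr0 k b),
    mulD (a ⊗ₜ[k] h) (b ⊗ₜ[k] g) = ∑ i ∈ rh.index, ∑ j ∈ rb.index,
      (a * lact (rh.left i) (rb.left j)) ⊗ₜ[k] (ract (rh.right i) (rb.right j) * g)

/-- The right action `h ⊲ a = h₍₂₎ λ⁻¹(h₍₁₎, a₍₁₎) λ(h₍₃₎, a₍₂₎)` induced by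
a skew pairing `λ : H ⊗ A → k` (where `λ⁻¹ = λ ∘ (S_H ⊗ id)`). -/
def IsQDRact {A H : Type} [Ring A] [Ring H] [HopfAlgebra k A] [HopfAlgebra k H]
    (lam : H →ₗ[k] A →ₗ[k] k) (ract : H →ₗ[k] A →ₗ[k] H) : Prop :=
  ∀ (h : H) (a : A) (rh : Repr0 k h)
    (rh1 : ∀ i : rh.ι, Repr0 k (rh.left i)) (ra : Repr0 k a),
    ract h a = ∑ i ∈ rh.index, ∑ j ∈ (rh1 i).index, ∑ l ∈ ra.index,
      (lam (antipode (R := k) ((rh1 i).left j)) (ra.left l) * lam (rh.right i) (ra.right l))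
        • (rh1 i).right j

/-- The left action `h ⊳ a = a₍₂₎ λ⁻¹(h₍₁₎, a₍₁₎) λ(h₍₂₎, a₍₃₎)` induced by
a skew pairing `λ : H ⊗ A → k`. -/
def IsQDLact {A H : Type} [Ring A] [Ring H] [HopfAlgebra k A] [HopfAlgebra k H]
    (lam : H →ₗ[k] A →ₗ[k] k) (lact : H →ₗ[k] A →ₗ[k] A) : Prop :=
  ∀ (h : H) (a : A) (rh : Repr0 k h) (ra : Repr0 k a)
    (ra1 : ∀ l : ra.ι, Repr0 k (ra.left l)),
    lact h a = ∑ i ∈ rh.index, ∑ l ∈ ra.index, ∑ j ∈ (ra1 l).index,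
      (lam (antipode (R := k) (rh.left i)) ((ra1 l).left j) * lam (rh.right i) (ra.right l))
        • (ra1 l).right j

/-- `σ(a ⊗ h, b ⊗ g) = u(a₍₁₎, g₍₁₎) p(a₍₂₎, b₍₁₎) τ(h₍₁₎, g₍₂₎) v(h₍₂₎, b₍₂₎)`. -/
def IsSigma {A H : Type} [Ring A] [Ring H] [Bialgebra k A] [Bialgebra k H]
    (u : A →ₗ[k] H →ₗ[k] k) (p : A →ₗ[k] A →ₗ[k] k)
    (τ : H →ₗ[k] H →ₗ[k] k) (v : H →ₗ[k] A →ₗ[k] k)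
    (σ : A ⊗[k] H →ₗ[k] A ⊗[k] H →ₗ[k] k) : Prop :=
  ∀ (a b : A) (h g : H) (ra : Repr0 k a) (rb : Repr0 k b)
    (rh : Repr0 k h) (rg : Repr0 k g),
    σ (a ⊗ₜ[k] h) (b ⊗ₜ[k] g) = ∑ m ∈ ra.index, ∑ n ∈ rb.index, ∑ i ∈ rh.index, ∑ j ∈ rg.index,
      u (ra.left m) (rg.left j) * p (ra.right m) (rb.left n)
        * τ (rh.left i) (rg.right j) * v (rh.right i) (rb.right n)

/-! Both identities are (BR5) for `σ` on a pair `1 ⊗ h`, `b ⊗ 1`, pushed to `H` along `ε ⊗ id`.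
This map sends `(1 ⊗ h)(b ⊗ 1) = (h₍₁₎ ⊳ b₍₁₎) ⊗ (h₍₂₎ ⊲ b₍₂₎)` to `h ⊲ b`, because `⊳`
preserves the counit, and `(b ⊗ 1)(1 ⊗ h) = b ⊗ h` to `ε(b) h`; the remaining counit then
collapses one Sweedler sum. -/

namespace Repr0

variable {R : Type} [CommSemiring R]

section Coalgebra

variable {C : Type} [AddCommMonoid C] [Module R C] [Coalgebra R C] {c : C}

def toRepr (r : Repr0 R c) : Coalgebra.Repr R c r.ι := ⟨r.index, r.left, r.right, r.eq⟩

def ofRepr {ι : Type} (r : Coalgebra.Repr R c ι) : Repr0 R c := ⟨r.index, r.left, r.right, r.eq⟩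

variable (R) in
def arbitrary (c : C) : Repr0 R c :=
  ofRepr (ℛ R c)

theorem sum_counit_smul (r : Repr0 R c) :
    ∑ i ∈ r.index, counit (R := R) (r.left i) • r.right i = c :=
  Coalgebra.sum_counit_smul r.toRepr

theorem sum_counit_smul_right (r : Repr0 R c) :
    ∑ i ∈ r.index, counit (R := R) (r.right i) • r.left i = c := by
  have h := congr(TensorProduct.rid R C $(Coalgebra.sum_tmul_counit_eq r.toRepr))
  simp only [map_sum, TensorProduct.rid_tmul, one_smul] at h
  exact h

theorem sum_apply_mul_counit (f : C →ₗ[R] R) (r : Repr0 R c) :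
    ∑ i ∈ r.index, f (r.right i) * counit (R := R) (r.left i) = f c := by
  conv_rhs => rw [← r.sum_counit_smul]
  simp [map_sum, mul_comm]

theorem sum_apply_mul_counit_right (f : C →ₗ[R] R) (r : Repr0 R c) :
    ∑ i ∈ r.index, f (r.left i) * counit (R := R) (r.right i) = f c := by
  conv_rhs => rw [← r.sum_counit_smul_right]
  simp [map_sum, mul_comm]

theorem sum_sum_counit_mul_smul_apply₂ {D M : Type} [AddCommMonoid D] [Module R D]
    [Coalgebra R D] [AddCommMonoid M] [Module R M] (f : C →ₗ[R] D →ₗ[R] M) {d : D}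
    (r : Repr0 R c) (s : Repr0 R d) :
    ∑ i ∈ r.index, ∑ j ∈ s.index,
      (counit (R := R) (r.left i) * counit (R := R) (s.left j)) • f (r.right i) (s.right j)
      = f c d := by
  conv_rhs => rw [← r.sum_counit_smul, ← s.sum_counit_smul]
  simp only [map_sum, map_smul, LinearMap.sum_apply, LinearMap.smul_apply, Finset.smul_sum,
    smul_smul]
  rw [Finset.sum_comm]
  simp only [mul_comm]

end Coalgebra

section Bialgebra

variable (A : Type) [Ring A] [Bialgebra R A] {C : Type} [AddCommMonoid C] [Module R C]
  [Coalgebra R C] {c : C}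

def one : Repr0 R (1 : A) where
  ι := Unit
  index := {()}
  left _ := 1
  right _ := 1
  eq := by simp [Algebra.TensorProduct.one_def]

def oneTmul (r : Repr0 R c) :
    Repr0 R ((1 : A) ⊗ₜ[R] c) where
  ι := r.ι
  index := r.index
  left i := 1 ⊗ₜ r.left i
  right i := 1 ⊗ₜ r.right i
  eq := by
    show _ = TensorProduct.tensorTensorTensorComm R A A C C (comul (1 : A) ⊗ₜ comul c)
    rw [Bialgebra.comul_one, ← r.eq, Algebra.TensorProduct.one_def]
    simp [TensorProduct.tmul_sum, map_sum]

def tmulOne (r : Repr0 R c) :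
    Repr0 R (c ⊗ₜ[R] (1 : A)) where
  ι := r.ι
  index := r.index
  left i := r.left i ⊗ₜ 1
  right i := r.right i ⊗ₜ 1
  eq := by
    show _ = TensorProduct.tensorTensorTensorComm R C C A A (comul c ⊗ₜ comul (1 : A))
    rw [Bialgebra.comul_one, ← r.eq, Algebra.TensorProduct.one_def]
    simp [TensorProduct.sum_tmul, map_sum]

end Bialgebra

end Repr0

namespace IsDCPMul

variable {A H : Type} [Ring A] [Ring H] [Bialgebra k A] [Bialgebra k H]
  {lact : H →ₗ[k] A →ₗ[k] A} {ract : H →ₗ[k] A →ₗ[k] H}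
  {mulD : A ⊗[k] H →ₗ[k] A ⊗[k] H →ₗ[k] A ⊗[k] H}

theorem tmul_one_mul_one_tmul (hmp : IsMatchedPair lact ract) (hmulD : IsDCPMul lact ract mulD)
    (a : A) (g : H) : mulD (a ⊗ₜ 1) (1 ⊗ₜ g) = a ⊗ₜ g := by
  simp [hmulD a 1 1 g (Repr0.one H) (Repr0.one A), Repr0.one, hmp.lact_unit, hmp.ract_unit]

theorem counit_rTensor_one_tmul_mul_tmul_one (hmp : IsMatchedPair lact ract)
    (hmulD : IsDCPMul lact ract mulD) (h : H) (b : A) :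
    TensorProduct.lid k H (counit.rTensor H (mulD (1 ⊗ₜ h) (b ⊗ₜ 1))) = ract h b := by
  rw [hmulD 1 b h 1 (Repr0.arbitrary k h) (Repr0.arbitrary k b)]
  simpa [map_sum, hmp.lact_counit] using
    Repr0.sum_sum_counit_mul_smul_apply₂ ract (Repr0.arbitrary k h) (Repr0.arbitrary k b)

end IsDCPMul

/-- compatibility with the right action for the maps `u`, `v` obtained from
a coquasitriangular structure `σ` on a double cross product `A ⋈ H`:
`v(h₍₁₎, b₍₁₎)(h₍₂₎ ⊲ b₍₂₎) = h₍₁₎ v(h₍₂₎, b)` and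
`(g₍₁₎ ⊲ a₍₁₎) u(a₍₂₎, g₍₂₎) = u(a, g₍₁₎) g₍₂₎`. -/
theorem double_cross_product_action_compatibilities {k A H : Type} [Field k] [Ring A] [Ring H]
    [HopfAlgebra k A] [HopfAlgebra k H]
    (lact : H →ₗ[k] A →ₗ[k] A) (ract : H →ₗ[k] A →ₗ[k] H)
    (hmp : IsMatchedPair lact ract)
    (mulD : A ⊗[k] H →ₗ[k] A ⊗[k] H →ₗ[k] A ⊗[k] H) (hmulD : IsDCPMul lact ract mulD)
    (σ : A ⊗[k] H →ₗ[k] A ⊗[k] H →ₗ[k] k)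
    (hσ : IsCQTMul mulD ((1 : A) ⊗ₜ[k] (1 : H)) σ)
    (u : A →ₗ[k] H →ₗ[k] k) (hudef : ∀ (a : A) (h : H), u a h = σ (a ⊗ₜ[k] (1 : H)) ((1 : A) ⊗ₜ[k] h))
    (v : H →ₗ[k] A →ₗ[k] k) (hvdef : ∀ (h : H) (a : A), v h a = σ ((1 : A) ⊗ₜ[k] h) (a ⊗ₜ[k] (1 : H))) :
    (∀ (h : H) (b : A) (rh : Repr0 k h) (rb : Repr0 k b),
      ∑ i ∈ rh.index, ∑ j ∈ rb.index,
          v (rh.left i) (rb.left j) • ract (rh.right i) (rb.right j)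
        = ∑ i ∈ rh.index, v (rh.right i) b • rh.left i) ∧
    (∀ (a : A) (g : H) (ra : Repr0 k a) (rg : Repr0 k g),
      ∑ i ∈ rg.index, ∑ j ∈ ra.index,
          u (ra.right j) (rg.right i) • ract (rg.left i) (ra.left j)
        = ∑ i ∈ rg.index, u a (rg.left i) • rg.right i) := by
  set φ : A ⊗[k] H →ₗ[k] H := TensorProduct.lid k H ∘ₗ counit.rTensor H
  have hφ_ract (h : H) (b : A) : φ (mulD (1 ⊗ₜ h) (b ⊗ₜ 1)) = ract h b :=
    hmulD.counit_rTensor_one_tmul_mul_tmul_one hmp h b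
  have hφ_tmul (a : A) (g : H) : φ (mulD (a ⊗ₜ 1) (1 ⊗ₜ g)) = counit (R := k) a • g := by
    simp [φ, hmulD.tmul_one_mul_one_tmul hmp]
  constructor
  · intro h b rh rb
    have E := congrArg φ (hσ.br5 _ _ (rh.oneTmul A) (rb.tmulOne H))
    simp only [Repr0.oneTmul, Repr0.tmulOne, map_sum, map_smul, hφ_ract, hφ_tmul, ← hvdef] at E
    refine E.trans (Finset.sum_congr rfl fun i _ => ?_)
    simp only [smul_smul, ← Finset.sum_smul, Repr0.sum_apply_mul_counit (v (rh.right i)) rb]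
  · intro a g ra rg
    have E := congrArg φ (hσ.br5 _ _ (ra.tmulOne H) (rg.oneTmul A))
    simp only [Repr0.oneTmul, Repr0.tmulOne, map_sum, map_smul, hφ_ract, hφ_tmul, ← hudef] at E
    refine (Finset.sum_comm.trans (E.symm.trans Finset.sum_comm)).trans
      (Finset.sum_congr rfl fun i _ => ?_)
    simp only [smul_smul, ← Finset.sum_smul]
    exact congrArg (· • rg.right i) (Repr0.sum_apply_mul_counit_right (u.flip (rg.left i)) ra)

end
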